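/- Let e ≥ 2 and let q be a prime power. The symplectic graph Sp(2e,q) is strongly regular with parameters v = (q^{2e}−1)/(q−1), k = q(q^{2e−2}−1)/(q−1), λ = q²(q^{2e−4}−1)/(q−1) + q − 1, μ = k/q = λ + 2, and its non-principal eigenvalues are r = q^{e−1} − 1 and s = −q^{e−1} − 1. -/

import Mathlib

open Finset Module

namespace Stmt10

/-- Points of PG(n−1,q): 1-dimensional subspaces of Fⁿ. -/
def Pt (F : Type*) [Field F] (n : ℕ) : Type _ :=
  {p : Submodule F (Fin n → F) // Module.finrank F p = 1}

/-- The symplectic graph Sp(n,q) (n = 2e): points of PG(n−1,q), adjacent iff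
orthogonal with respect to the nondegenerate alternating form B. -/
def sp {F : Type*} [Field F] {n : ℕ} (B : LinearMap.BilinForm F (Fin n → F)) :
    SimpleGraph (Pt F n) where
  Adj x y := x ≠ y ∧ (∀ u ∈ x.1, ∀ v ∈ y.1, B u v = 0) ∧
    (∀ u ∈ y.1, ∀ v ∈ x.1, B u v = 0)
  symm := ⟨fun _ _ h => ⟨h.1.symm, h.2.2, h.2.1⟩⟩
  loopless := ⟨fun _ h => h.1 rfl⟩

end Stmt10

namespace Stmt10Aux

/-- geometric sum -/
def N (q m : ℕ) : ℕ := ∑ i ∈ Finset.range m, q ^ i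

lemma geom (q m : ℕ) (hq : 1 ≤ q) : (q - 1) * N q m = q ^ m - 1 := by
  induction m with
  | zero => simp [N]
  | succ m ih =>
    have h1 : 1 ≤ q ^ m := Nat.one_le_pow _ _ hq
    have h2 : q ^ (m + 1) = q * q ^ m := by ring
    simp only [N, Finset.sum_range_succ] at ih ⊢
    rw [Nat.mul_add, ih, h2]
    have h3 : (q - 1) * q ^ m + q ^ m = q * q ^ m := by
      rcases Nat.exists_eq_add_of_le hq with ⟨r, rfl⟩
      have : 1 + r - 1 = r := by omega
      rw [this]; ring
    omega

lemma N_succ (q m : ℕ) : N q (m + 1) = 1 + q * N q m := by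
  simp only [N, Finset.sum_range_succ']
  simp [Finset.mul_sum, pow_succ, add_comm, mul_comm]

lemma div_eq_N (q m : ℕ) (hq : 2 ≤ q) : (q ^ m - 1) / (q - 1) = N q m := by
  have h := geom q m (by omega)
  exact Nat.div_eq_of_eq_mul_left (by omega) (by rw [← h]; ring)

lemma mul_div_eq_N (c q m : ℕ) (hq : 2 ≤ q) : c * (q ^ m - 1) / (q - 1) = c * N q m := by
  have := geom q m (by omega)
  symm
  refine (Nat.div_eq_of_eq_mul_left (by omega) ?_).symm
  rw [← this]; ring

variable {F : Type*} [Field F] {n : ℕ}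

lemma span_eq_of_mem {p : Submodule F (Fin n → F)} (hp : Module.finrank F p = 1)
    {v : Fin n → F} (hv : v ∈ p) (h0 : v ≠ 0) : Submodule.span F {v} = p := by
  refine Submodule.eq_of_le_of_finrank_eq ((Submodule.span_le).2 (by simpa)) ?_
  rw [finrank_span_singleton h0, hp]

lemma exists_gen (p : Submodule F (Fin n → F)) (hp : Module.finrank F p = 1) :
    ∃ v : Fin n → F, v ≠ 0 ∧ p = Submodule.span F {v} := by
  have hbot : p ≠ ⊥ := by
    intro h
    rw [h, finrank_bot] at hp; simp at hp
  obtain ⟨v, hv, hv0⟩ := Submodule.exists_mem_ne_zero_of_ne_bot hbot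
  exact ⟨v, hv0, (span_eq_of_mem hp hv hv0).symm⟩


section Count

variable [Fintype F]

lemma card_nonzero (U : Submodule F (Fin n → F)) :
    Nat.card {v : Fin n → F // v ∈ U ∧ v ≠ 0} =
      Fintype.card F ^ Module.finrank F U - 1 := by
  classical
  have e1 : {v : Fin n → F // v ∈ U ∧ v ≠ 0} ≃ {v : U // v ≠ 0} :=
    { toFun := fun v => ⟨⟨v.1, v.2.1⟩, by simp [Submodule.mk_eq_zero, v.2.2]⟩
      invFun := fun v => ⟨v.1.1, v.1.2, fun h => v.2 (ZeroMemClass.coe_eq_zero.mp h)⟩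
      left_inv := fun v => rfl
      right_inv := fun v => rfl }
  rw [Nat.card_congr e1, Nat.card_eq_fintype_card]
  rw [Fintype.card_subtype]
  rw [Finset.filter_ne' Finset.univ (0 : U), Finset.card_erase_of_mem (Finset.mem_univ _),
    Finset.card_univ, card_eq_pow_finrank (K := F) (V := U)]

lemma ncard_lines [Fintype (Stmt10.Pt F n)] (W : Submodule F (Fin n → F)) :
    Nat.card {x : Stmt10.Pt F n // x.1 ≤ W} =
      N (Fintype.card F) (Module.finrank F W) := by
  classical
  set q := Fintype.card F with hqdef
  have hq : 2 ≤ q := Fintype.one_lt_card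
  rcases eq_or_ne W ⊥ with rfl | hW
  · have : IsEmpty {x : Stmt10.Pt F n // x.1 ≤ ⊥} := by
      constructor
      rintro ⟨x, hx⟩
      have hb : x.1 = ⊥ := le_bot_iff.mp hx
      have h2 := x.2
      rw [hb] at h2
      rw [finrank_bot] at h2
      exact absurd h2 (by norm_num)
    rw [Nat.card_of_isEmpty]
    simp [N]
  · -- main case
    obtain ⟨v₀, hv₀W, hv₀⟩ := Submodule.exists_mem_ne_zero_of_ne_bot hW
    set p₀ : Stmt10.Pt F n := ⟨Submodule.span F {v₀}, finrank_span_singleton hv₀⟩ with hp₀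
    set f : (Fin n → F) → Stmt10.Pt F n := fun v =>
      if h : v ≠ 0 then ⟨Submodule.span F {v}, finrank_span_singleton h⟩ else p₀ with hf
    set T : Finset (Fin n → F) := Finset.univ.filter (fun v => v ∈ W ∧ v ≠ 0) with hT
    set L : Finset (Stmt10.Pt F n) := Finset.univ.filter (fun x => x.1 ≤ W) with hL
    have hmaps : ∀ v ∈ T, f v ∈ L := by
      intro v hv
      simp only [hT, Finset.mem_filter, Finset.mem_univ, true_and] at hv
      simp only [hf, dif_pos hv.2, hL, Finset.mem_filter, Finset.mem_univ, true_and]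
      rw [show (if h : v ≠ 0 then ⟨Submodule.span F {v}, finrank_span_singleton h⟩ else p₀ : Stmt10.Pt F n) = ⟨Submodule.span F {v}, finrank_span_singleton hv.2⟩ from dif_pos hv.2]
      exact Submodule.span_le.2 (by simpa using hv.1)
    have hfib : ∀ x ∈ L, (T.filter (fun v => f v = x)).card = q - 1 := by
      intro x hx
      simp only [hL, Finset.mem_filter, Finset.mem_univ, true_and] at hx
      have : T.filter (fun v => f v = x) =
          Finset.univ.filter (fun v => v ∈ x.1 ∧ v ≠ 0) := by
        ext v
        simp only [hT, Finset.mem_filter, Finset.mem_univ, true_and, Finset.filter_filter]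
        constructor
        · rintro ⟨⟨hvW, hv0⟩, hfv⟩
          refine ⟨?_, hv0⟩
          rw [← hfv]
          simp only [hf, dif_pos hv0]
          rw [show (if h : v ≠ 0 then ⟨Submodule.span F {v}, finrank_span_singleton h⟩ else p₀ : Stmt10.Pt F n) = ⟨Submodule.span F {v}, finrank_span_singleton hv0⟩ from dif_pos hv0]
          exact Submodule.mem_span_singleton_self v
        · rintro ⟨hvx, hv0⟩
          refine ⟨⟨hx hvx, hv0⟩, ?_⟩
          simp only [hf, dif_pos hv0]
          rw [show (if h : v ≠ 0 then ⟨Submodule.span F {v}, finrank_span_singleton h⟩ else p₀ : Stmt10.Pt F n) = ⟨Submodule.span F {v}, finrank_span_singleton hv0⟩ from dif_pos hv0]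
          exact Subtype.ext (span_eq_of_mem x.2 hvx hv0)
      rw [this]
      have := card_nonzero (F := F) x.1
      rw [x.2, pow_one] at this
      rw [← this, Nat.card_eq_fintype_card, Fintype.card_subtype]
    have hcardT : T.card = q ^ Module.finrank F W - 1 := by
      have := card_nonzero (F := F) W
      rw [← this, Nat.card_eq_fintype_card, Fintype.card_subtype]
    have key := Finset.card_eq_sum_card_fiberwise hmaps
    rw [hcardT, Finset.sum_congr rfl hfib, Finset.sum_const, smul_eq_mul] at key
    have hgeom := geom q (Module.finrank F W) (by omega)
    have hcard : Nat.card {x : Stmt10.Pt F n // x.1 ≤ W} = L.card := by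
      rw [Nat.card_eq_fintype_card, Fintype.card_subtype]
    rw [hcard]
    have : (q - 1) * L.card = (q - 1) * N q (Module.finrank F W) := by
      rw [hgeom, key]; ring
    exact Nat.eq_of_mul_eq_mul_left (by omega) this

end Count


section Form

open Stmt10

variable (B : LinearMap.BilinForm F (Fin n → F))

lemma skew (halt : ∀ v, B v v = 0) (u v : Fin n → F) : B v u = - B u v := by
  have h := halt (u + v)
  simp only [map_add, LinearMap.add_apply, halt u, halt v, zero_add, add_zero] at h
  linear_combination h

lemma sp_adj_iff (x y : Pt F n) : (sp B).Adj x y ↔ (x ≠ y ∧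
    (∀ u ∈ x.1, ∀ v ∈ y.1, B u v = 0) ∧ (∀ u ∈ y.1, ∀ v ∈ x.1, B u v = 0)) := Iff.rfl

lemma adj_iff (halt : ∀ v, B v v = 0) (x y : Pt F n) (u : Fin n → F)
    (hu : x.1 = Submodule.span F {u}) :
    (sp B).Adj x y ↔ y ≠ x ∧ y.1 ≤ LinearMap.ker (B u) := by
  rw [sp_adj_iff]
  constructor
  · rintro ⟨hne, h1, _⟩
    refine ⟨hne.symm, fun v hv => ?_⟩
    have hu' : u ∈ x.1 := by rw [hu]; exact Submodule.mem_span_singleton_self u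
    exact LinearMap.mem_ker.mpr (h1 u hu' v hv)
  · rintro ⟨hne, hle⟩
    have huv : ∀ v ∈ y.1, B u v = 0 := fun v hv => hle hv
    refine ⟨hne.symm, ?_, ?_⟩
    · intro u' hu' v hv
      rw [hu] at hu'
      obtain ⟨c, rfl⟩ := Submodule.mem_span_singleton.mp hu'
      rw [LinearMap.map_smul₂, huv v hv, smul_zero]
    · intro v hv u' hu'
      rw [hu] at hu'
      obtain ⟨c, rfl⟩ := Submodule.mem_span_singleton.mp hu'
      have h0 : B v u = 0 := by rw [skew B halt, huv v hv, neg_zero]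
      rw [map_smul, h0, smul_zero]

lemma pt_le_ker (halt : ∀ v, B v v = 0) (x : Pt F n) (u : Fin n → F)
    (hu : x.1 = Submodule.span F {u}) : x.1 ≤ LinearMap.ker (B u) := by
  rw [hu, Submodule.span_le]
  intro v hv
  simp only [Set.mem_singleton_iff] at hv
  subst hv
  exact LinearMap.mem_ker.mpr (halt v)

lemma finrank_ker_functional (f : (Fin n → F) →ₗ[F] F) (hf : f ≠ 0) :
    Module.finrank F (LinearMap.ker f) + 1 = n := by
  have h := LinearMap.finrank_range_add_finrank_ker f
  have hr : LinearMap.range f = ⊤ := by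
    rcases Ideal.eq_bot_or_top (LinearMap.range f) with h' | h'
    · exact absurd (LinearMap.range_eq_bot.mp h') hf
    · exact h'
  rw [hr, finrank_top, Module.finrank_self, Module.finrank_fin_fun] at h
  omega

lemma functional_scale {f g : (Fin n → F) →ₗ[F] F} (hf : f ≠ 0)
    (h : LinearMap.ker f ≤ LinearMap.ker g) : ∃ c : F, g = c • f := by
  obtain ⟨v, hv⟩ : ∃ v, f v ≠ 0 := by
    by_contra h'
    push_neg at h'
    exact hf (LinearMap.ext fun v => by rw [h' v, LinearMap.zero_apply])
  refine ⟨g v / f v, LinearMap.ext fun w => ?_⟩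
  have hw : w - (f w / f v) • v ∈ LinearMap.ker f := by
    rw [LinearMap.mem_ker, map_sub, map_smul, smul_eq_mul, div_mul_cancel₀ _ hv, sub_self]
  have h2 := h hw
  rw [LinearMap.mem_ker, map_sub, map_smul, smul_eq_mul] at h2
  rw [LinearMap.smul_apply, smul_eq_mul]
  field_simp at h2 ⊢
  linear_combination h2

lemma finrank_ker_inf (hnd : ∀ v, (∀ w, B v w = 0) → v = 0)
    {u w : Fin n → F} (hu : u ≠ 0) (hw : w ≠ 0)
    (hsp : Submodule.span F {u} ≠ Submodule.span F {w}) :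
    Module.finrank F ↥(LinearMap.ker (B u) ⊓ LinearMap.ker (B w)) + 2 = n := by
  have hBu : B u ≠ 0 := fun h => hu (hnd u (fun z => by rw [h]; rfl))
  have hBw : B w ≠ 0 := fun h => hw (hnd w (fun z => by rw [h]; rfl))
  have indep : ∀ (a b : Fin n → F), a ≠ 0 → b ≠ 0 →
      Submodule.span F {a} ≠ Submodule.span F {b} →
      ¬ LinearMap.ker (B a) ≤ LinearMap.ker (B b) := by
    intro a b ha hb hab hle
    have hBa : B a ≠ 0 := fun h => ha (hnd a (fun z => by rw [h]; rfl))
    obtain ⟨c, hc⟩ := functional_scale hBa hle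
    have hbca : b = c • a := by
      apply sub_eq_zero.mp
      apply hnd
      intro z
      rw [map_sub, LinearMap.sub_apply, map_smul, LinearMap.smul_apply]
      have := congrFun (congrArg DFunLike.coe hc) z
      rw [LinearMap.smul_apply, smul_eq_mul] at this
      rw [this]
      simp [smul_eq_mul]
    have hc0 : c ≠ 0 := by rintro rfl; simp at hbca; exact hb hbca
    apply hab
    rw [hbca]
    exact (Submodule.span_singleton_smul_eq (isUnit_iff_ne_zero.mpr hc0) a).symm ▸
      (Submodule.span_singleton_smul_eq (isUnit_iff_ne_zero.mpr hc0) a)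
  have h1 := indep u w hu hw hsp
  have h2 := indep w u hw hu hsp.symm
  obtain ⟨a, ha1, ha2⟩ := SetLike.not_le_iff_exists.mp h1
  obtain ⟨b, hb1, hb2⟩ := SetLike.not_le_iff_exists.mp h2
  rw [LinearMap.mem_ker] at ha1 hb1
  have ha2' : B w a ≠ 0 := fun h => ha2 (LinearMap.mem_ker.mpr h)
  have hb2' : B u b ≠ 0 := fun h => hb2 (LinearMap.mem_ker.mpr h)
  set f : (Fin n → F) →ₗ[F] F × F := LinearMap.prod (B u) (B w) with hfdef
  have hker : LinearMap.ker f = LinearMap.ker (B u) ⊓ LinearMap.ker (B w) :=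
    LinearMap.ker_prod _ _
  have hrange : LinearMap.range f = ⊤ := by
    rw [LinearMap.range_eq_top]
    intro z
    refine ⟨(z.1 / B u b) • b + (z.2 / B w a) • a, ?_⟩
    have : f ((z.1 / B u b) • b + (z.2 / B w a) • a) =
        (B u ((z.1 / B u b) • b + (z.2 / B w a) • a),
         B w ((z.1 / B u b) • b + (z.2 / B w a) • a)) := rfl
    rw [this]
    have e1 : B u ((z.1 / B u b) • b + (z.2 / B w a) • a) = z.1 := by
      rw [map_add, map_smul, map_smul, smul_eq_mul, smul_eq_mul, ha1,
        div_mul_cancel₀ _ hb2', mul_zero, add_zero]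
    have e2 : B w ((z.1 / B u b) • b + (z.2 / B w a) • a) = z.2 := by
      have hwb : B w b = 0 := hb1
      rw [map_add, map_smul, map_smul, smul_eq_mul, smul_eq_mul, hwb,
        div_mul_cancel₀ _ ha2', mul_zero, zero_add]
    rw [e1, e2]
  have h := LinearMap.finrank_range_add_finrank_ker f
  rw [hrange, hker, finrank_top, Module.finrank_prod, Module.finrank_self,
    Module.finrank_fin_fun] at h
  omega

end Form

section Graph

open Stmt10

variable [Fintype F] (B : LinearMap.BilinForm F (Fin n → F))

lemma adj_ne {x y : Pt F n} (h : (sp B).Adj x y) : x ≠ y := ((sp_adj_iff B x y).1 h).1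

lemma neighborSet_eq (halt : ∀ v, B v v = 0) (x : Pt F n) {u : Fin n → F}
    (hu : x.1 = Submodule.span F {u}) :
    (sp B).neighborSet x = {y : Pt F n | y.1 ≤ LinearMap.ker (B u)} \ {x} := by
  ext y
  simp only [SimpleGraph.mem_neighborSet, adj_iff B halt x y u hu, Set.mem_diff,
    Set.mem_setOf_eq, Set.mem_singleton_iff]
  tauto

variable [Fintype (Pt F n)]

lemma ncard_lineSet (W : Submodule F (Fin n → F)) :
    {y : Pt F n | y.1 ≤ W}.ncard = N (Fintype.card F) (Module.finrank F W) := by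
  rw [← Nat.card_coe_set_eq]
  exact ncard_lines W

lemma card_pt : Fintype.card (Pt F n) = N (Fintype.card F) n := by
  have h := ncard_lines (F := F) (n := n) ⊤
  rw [finrank_top, Module.finrank_fin_fun] at h
  rw [← Nat.card_eq_fintype_card, ← h]
  exact Nat.card_congr (Equiv.subtypeUnivEquiv (fun _ => le_top)).symm

lemma ncard_neighborSet (halt : ∀ v, B v v = 0) (hnd : ∀ v, (∀ w, B v w = 0) → v = 0)
    (x : Pt F n) (hn : 1 ≤ n) :
    Nat.card ((sp B).neighborSet x) = N (Fintype.card F) (n - 1) - 1 := by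
  obtain ⟨u, hu0, hu⟩ := exists_gen x.1 x.2
  have hBu : B u ≠ 0 := fun h => hu0 (hnd u (fun z => by rw [h]; rfl))
  have hfr : Module.finrank F (LinearMap.ker (B u)) = n - 1 := by
    have := finrank_ker_functional (B u) hBu
    omega
  rw [Nat.card_coe_set_eq, neighborSet_eq B halt x hu,
    Set.ncard_diff_singleton_of_mem
      (show x ∈ {y : Pt F n | y.1 ≤ LinearMap.ker (B u)} from pt_le_ker B halt x u hu),
    ncard_lineSet, hfr]

lemma ncard_common_adj (halt : ∀ v, B v v = 0) (hnd : ∀ v, (∀ w, B v w = 0) → v = 0)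
    {x y : Pt F n} (hadj : (sp B).Adj x y) :
    Nat.card ((sp B).commonNeighbors x y) = N (Fintype.card F) (n - 2) - 2 := by
  obtain ⟨u, hu0, hu⟩ := exists_gen x.1 x.2
  obtain ⟨w, hw0, hw⟩ := exists_gen y.1 y.2
  have hxy : x ≠ y := ((sp_adj_iff B x y).1 hadj).1
  have hsp : Submodule.span F {u} ≠ Submodule.span F {w} := by
    rw [← hu, ← hw]
    exact fun h => hxy (Subtype.ext h)
  have hfr : Module.finrank F ↥(LinearMap.ker (B u) ⊓ LinearMap.ker (B w)) = n - 2 := by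
    have := finrank_ker_inf B hnd hu0 hw0 hsp
    omega
  have hxw : x.1 ≤ LinearMap.ker (B w) :=
    ((adj_iff B halt y x w hw).mp ((sp B).adj_symm hadj)).2
  have hyu : y.1 ≤ LinearMap.ker (B u) :=
    ((adj_iff B halt x y u hu).mp hadj).2
  have hset : (sp B).commonNeighbors x y =
      {z : Pt F n | z.1 ≤ LinearMap.ker (B u) ⊓ LinearMap.ker (B w)} \ {x, y} := by
    ext z
    simp only [SimpleGraph.mem_commonNeighbors, SimpleGraph.mem_neighborSet,
      adj_iff B halt x z u hu, adj_iff B halt y z w hw, Set.mem_diff, Set.mem_setOf_eq,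
      Set.mem_insert_iff, Set.mem_singleton_iff, le_inf_iff]
    tauto
  rw [Nat.card_coe_set_eq, hset, Set.ncard_diff, ncard_lineSet, hfr,
    Set.ncard_pair hxy]
  · rintro z (rfl | rfl)
    · exact Set.mem_setOf_eq ▸ le_inf_iff.mpr ⟨pt_le_ker B halt z u hu, hxw⟩
    · exact Set.mem_setOf_eq ▸ le_inf_iff.mpr ⟨hyu, pt_le_ker B halt z w hw⟩

lemma ncard_common_nonadj (halt : ∀ v, B v v = 0) (hnd : ∀ v, (∀ w, B v w = 0) → v = 0)
    {x y : Pt F n} (hxy : x ≠ y) (hnadj : ¬ (sp B).Adj x y) :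
    Nat.card ((sp B).commonNeighbors x y) = N (Fintype.card F) (n - 2) := by
  obtain ⟨u, hu0, hu⟩ := exists_gen x.1 x.2
  obtain ⟨w, hw0, hw⟩ := exists_gen y.1 y.2
  have hsp : Submodule.span F {u} ≠ Submodule.span F {w} := by
    rw [← hu, ← hw]
    exact fun h => hxy (Subtype.ext h)
  have hfr : Module.finrank F ↥(LinearMap.ker (B u) ⊓ LinearMap.ker (B w)) = n - 2 := by
    have := finrank_ker_inf B hnd hu0 hw0 hsp
    omega
  have hset : (sp B).commonNeighbors x y =
      {z : Pt F n | z.1 ≤ LinearMap.ker (B u) ⊓ LinearMap.ker (B w)} := by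
    ext z
    simp only [SimpleGraph.mem_commonNeighbors, SimpleGraph.mem_neighborSet,
      adj_iff B halt x z u hu, adj_iff B halt y z w hw, Set.mem_setOf_eq, le_inf_iff]
    constructor
    · tauto
    · rintro ⟨h1, h2⟩
      have hzx : z ≠ x := by
        rintro rfl
        exact hnadj ((sp B).adj_symm ((adj_iff B halt y z w hw).mpr ⟨hxy, h2⟩))
      have hzy : z ≠ y := by
        rintro rfl
        exact hnadj ((adj_iff B halt x z u hu).mpr ⟨hxy.symm, h1⟩)
      exact ⟨⟨hzx, h1⟩, hzy, h2⟩
  rw [Nat.card_coe_set_eq, hset, ncard_lineSet, hfr]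

end Graph

section Eigen

open Matrix SimpleGraph

lemma mem_spectrum_iff_eigen {V : Type*} [Fintype V] [DecidableEq V]
    (A : Matrix V V ℝ) (t : ℝ) :
    t ∈ spectrum ℝ A ↔ ∃ v : V → ℝ, v ≠ 0 ∧ A *ᵥ v = t • v := by
  rw [spectrum.mem_iff, Algebra.algebraMap_eq_smul_one, Matrix.isUnit_iff_isUnit_det,
    isUnit_iff_ne_zero, not_ne_iff, ← Matrix.exists_mulVec_eq_zero_iff]
  constructor
  · rintro ⟨v, hv, hveq⟩
    refine ⟨v, hv, ?_⟩
    rw [Matrix.sub_mulVec, Matrix.smul_mulVec, Matrix.one_mulVec] at hveq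
    exact (sub_eq_zero.mp hveq).symm
  · rintro ⟨v, hv, hveq⟩
    refine ⟨v, hv, ?_⟩
    rw [Matrix.sub_mulVec, Matrix.smul_mulVec, Matrix.one_mulVec, hveq, sub_self]

theorem spectrum_srg {V : Type*} [Fintype V] [Nonempty V] [DecidableEq V]
    (G : SimpleGraph V) [DecidableRel G.Adj] {nn k l m : ℕ}
    (h : G.IsSRGWith nn k l m) (r s : ℝ)
    (hrs_sum : r + s = (l : ℝ) - m)
    (hrs_prod : r * s = (m : ℝ) - k)
    (hk : 0 < k) (hr1 : r + 1 ≠ 0) (hs1 : s + 1 ≠ 0) :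
    spectrum ℝ (G.adjMatrix ℝ) = {(k : ℝ), r, s} := by
  set A : Matrix V V ℝ := G.adjMatrix ℝ with hA
  set Jm : Matrix V V ℝ := Matrix.of (fun _ _ => (1 : ℝ)) with hJ
  have hreg := h.regular
  have hAJ : A * Jm = (k : ℝ) • Jm := by
    ext i j
    simp only [hA, hJ, Matrix.smul_apply, Matrix.of_apply, smul_eq_mul, mul_one,
      SimpleGraph.adjMatrix_mul_apply]
    rw [Finset.sum_const, nsmul_eq_mul, mul_one]
    exact_mod_cast congrArg Nat.cast (hreg i)
  have hcompl : Gᶜ.adjMatrix ℝ = Jm - 1 - A := by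
    ext i j
    by_cases hij : i = j
    · subst hij
      simp [hJ, hA]
    · by_cases hadj : G.Adj i j
      · simp [hJ, hA, Matrix.one_apply_ne hij, hadj, SimpleGraph.compl_adj, hij]
      · simp [hJ, hA, Matrix.one_apply_ne hij, hadj, SimpleGraph.compl_adj, hij]
  have hmx := h.matrix_eq (α := ℝ)
  rw [hcompl, pow_two] at hmx
  simp only [← Nat.cast_smul_eq_nsmul ℝ] at hmx
  rw [← hA] at hmx
  have hcommAB : ∀ a b : ℝ, Commute (A - a • 1) (A - b • 1) := by
    intro a b
    have h1 : Commute A (b • (1 : Matrix V V ℝ)) := (Commute.one_right A).smul_right b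
    have h2 : Commute (a • (1 : Matrix V V ℝ)) A := (Commute.one_left A).smul_left a
    have h3 : Commute (a • (1 : Matrix V V ℝ)) (b • (1 : Matrix V V ℝ)) :=
      ((Commute.refl (1 : Matrix V V ℝ)).smul_left a).smul_right b
    exact ((Commute.refl A).sub_right h1).sub_left (h2.sub_right h3)
  have expand2 : ∀ a b : ℝ, (A - a • 1) * (A - b • 1)
      = A * A - b • A - a • A + (a * b) • (1 : Matrix V V ℝ) := by
    intro a b
    simp only [sub_mul, mul_sub, smul_mul_assoc, mul_smul_comm, one_mul, mul_one,
      smul_sub, smul_smul]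
    rw [mul_comm b a]
    abel
  -- key identity
  have key : (A - r • 1) * (A - s • 1) = (m : ℝ) • Jm := by
    rw [expand2, hmx]
    match_scalars <;> ring_nf <;> nlinarith [hrs_sum, hrs_prod]
  have comm2 : ∀ a b : ℝ, (A - a • 1) * (A - b • 1) = (A - b • 1) * (A - a • 1) :=
    fun a b => (hcommAB a b).eq
  have hvanish : (A - (k : ℝ) • 1) * ((A - r • 1) * (A - s • 1)) = 0 := by
    rw [key, Matrix.mul_smul, sub_mul, hAJ, smul_mul_assoc, one_mul, sub_self, smul_zero]
  -- trace facts
  have htrA : Matrix.trace A = 0 := SimpleGraph.trace_adjMatrix ℝ G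
  have htrA2 : Matrix.trace (A * A) = (Fintype.card V : ℝ) * k := by
    rw [Matrix.trace]
    have : ∀ i : V, (A * A) i i = (k : ℝ) := by
      intro i
      rw [hA, SimpleGraph.adjMatrix_mul_self_apply_self, hreg i]
    simp only [Matrix.diag_apply]
    rw [Finset.sum_congr rfl (fun i _ => this i), Finset.sum_const, nsmul_eq_mul,
      Finset.card_univ]
  have htr1 : Matrix.trace (1 : Matrix V V ℝ) = (Fintype.card V : ℝ) := by
    simp [Matrix.trace_one]
  have htr_prod : ∀ a b : ℝ, Matrix.trace ((A - a • 1) * (A - b • 1))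
      = (Fintype.card V : ℝ) * k + a * b * (Fintype.card V : ℝ) := by
    intro a b
    rw [expand2, Matrix.trace_add, Matrix.trace_sub, Matrix.trace_sub, Matrix.trace_smul,
      Matrix.trace_smul, Matrix.trace_smul, htrA, htrA2, htr1]
    simp only [smul_eq_mul, mul_zero, sub_zero]
    try ring
  have hcard0 : (0 : ℝ) < Fintype.card V := by
    exact_mod_cast Fintype.card_pos
  have hk0 : (0 : ℝ) < k := by exact_mod_cast hk
  -- now the three memberships
  have hkmem : (k : ℝ) ∈ spectrum ℝ A := by
    rw [mem_spectrum_iff_eigen]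
    refine ⟨fun _ => 1, ?_, ?_⟩
    · intro hcon
      have := congrFun hcon (Classical.arbitrary V)
      norm_num at this
    · ext i
      simp only [SimpleGraph.adjMatrix_mulVec_apply, hA, Pi.smul_apply, smul_eq_mul, mul_one]
      rw [Finset.sum_const, nsmul_eq_mul, mul_one]
      exact_mod_cast congrArg Nat.cast (hreg i)
  have hrmem : r ∈ spectrum ℝ A := by
    by_contra hcon
    rw [spectrum.notMem_iff, Algebra.algebraMap_eq_smul_one] at hcon
    have hunit : IsUnit (A - r • 1) := by
      have := hcon.neg
      rwa [neg_sub] at this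
    have hrearr : (A - r • 1) * ((A - (k : ℝ) • 1) * (A - s • 1)) = 0 := by
      calc (A - r • 1) * ((A - (k : ℝ) • 1) * (A - s • 1))
          = ((A - r • 1) * (A - (k : ℝ) • 1)) * (A - s • 1) := by rw [mul_assoc]
        _ = ((A - (k : ℝ) • 1) * (A - r • 1)) * (A - s • 1) := by rw [comm2]
        _ = (A - (k : ℝ) • 1) * ((A - r • 1) * (A - s • 1)) := by rw [mul_assoc]
        _ = 0 := hvanish
    have hzero : (A - (k : ℝ) • 1) * (A - s • 1) = 0 :=
      hunit.mul_left_cancel (by rw [hrearr, mul_zero])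
    have := htr_prod (k : ℝ) s
    rw [hzero, Matrix.trace_zero] at this
    have hfac : (Fintype.card V : ℝ) * k * (1 + s) = 0 := by linarith [this]
    rcases mul_eq_zero.mp hfac with h1 | h2
    · rcases mul_eq_zero.mp h1 with h3 | h4
      · linarith
      · linarith
    · exact hs1 (by linarith)
  have hsmem : s ∈ spectrum ℝ A := by
    by_contra hcon
    rw [spectrum.notMem_iff, Algebra.algebraMap_eq_smul_one] at hcon
    have hunit : IsUnit (A - s • 1) := by
      have := hcon.neg
      rwa [neg_sub] at this
    have hrearr : (A - s • 1) * ((A - (k : ℝ) • 1) * (A - r • 1)) = 0 := by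
      calc (A - s • 1) * ((A - (k : ℝ) • 1) * (A - r • 1))
          = ((A - s • 1) * (A - (k : ℝ) • 1)) * (A - r • 1) := by rw [mul_assoc]
        _ = ((A - (k : ℝ) • 1) * (A - s • 1)) * (A - r • 1) := by rw [comm2]
        _ = (A - (k : ℝ) • 1) * ((A - s • 1) * (A - r • 1)) := by rw [mul_assoc]
        _ = (A - (k : ℝ) • 1) * ((A - r • 1) * (A - s • 1)) := by rw [comm2]
        _ = 0 := hvanish
    have hzero : (A - (k : ℝ) • 1) * (A - r • 1) = 0 :=
      hunit.mul_left_cancel (by rw [hrearr, mul_zero])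
    have := htr_prod (k : ℝ) r
    rw [hzero, Matrix.trace_zero] at this
    have hfac : (Fintype.card V : ℝ) * k * (1 + r) = 0 := by linarith [this]
    rcases mul_eq_zero.mp hfac with h1 | h2
    · rcases mul_eq_zero.mp h1 with h3 | h4
      · linarith
      · linarith
    · exact hr1 (by linarith)
  -- the inclusion
  apply Set.Subset.antisymm
  · intro t ht
    rw [mem_spectrum_iff_eigen] at ht
    obtain ⟨v, hv0, hv⟩ := ht
    have e1 : (A - s • 1) *ᵥ v = (t - s) • v := by
      rw [Matrix.sub_mulVec, hv, Matrix.smul_mulVec, Matrix.one_mulVec, ← sub_smul]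
    have e2 : (A - r • 1) *ᵥ ((t - s) • v) = ((t - r) * (t - s)) • v := by
      rw [Matrix.mulVec_smul, Matrix.sub_mulVec, hv, Matrix.smul_mulVec,
        Matrix.one_mulVec, ← sub_smul, smul_smul, mul_comm]
    have e3 : (A - (k : ℝ) • 1) *ᵥ (((t - r) * (t - s)) • v)
        = ((t - (k : ℝ)) * ((t - r) * (t - s))) • v := by
      rw [Matrix.mulVec_smul, Matrix.sub_mulVec, hv, Matrix.smul_mulVec,
        Matrix.one_mulVec, ← sub_smul, smul_smul, mul_comm]
    have e4 : ((A - (k : ℝ) • 1) * ((A - r • 1) * (A - s • 1))) *ᵥ v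
        = ((t - (k : ℝ)) * ((t - r) * (t - s))) • v := by
      rw [← Matrix.mulVec_mulVec, ← Matrix.mulVec_mulVec, e1, e2, e3]
    rw [hvanish, Matrix.zero_mulVec] at e4
    have hscal : (t - (k : ℝ)) * ((t - r) * (t - s)) = 0 := by
      by_contra hne
      exact hv0 (by
        have := smul_eq_zero.mp e4.symm
        tauto)
    rcases mul_eq_zero.mp hscal with h1 | h2
    · left; linarith [sub_eq_zero.mp h1]
    · rcases mul_eq_zero.mp h2 with h3 | h4
      · right; left; linarith [sub_eq_zero.mp h3]
      · right; right; exact Set.mem_singleton_iff.mpr (by linarith [sub_eq_zero.mp h4])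
  · intro t ht
    rcases ht with rfl | rfl | rfl
    · exact hkmem
    · exact hrmem
    · exact hsmem

end Eigen

end Stmt10Aux


open Stmt10 in
open Classical in
/-- Sp(2e,q) is strongly regular with the stated parameters
(where μ = k/q = λ + 2), and its eigenvalues are k, q^{e−1}−1 and −q^{e−1}−1. -/
theorem stmt10 {F : Type*} [Field F] [Fintype F] (q e : ℕ)
    (hq : Fintype.card F = q) (he : 2 ≤ e)
    (B : LinearMap.BilinForm F (Fin (2 * e) → F))
    (halt : ∀ v, B v v = 0)
    (hnd : ∀ v, (∀ w, B v w = 0) → v = 0)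
    [Fintype (Pt F (2 * e))] :
    (sp B).IsSRGWith ((q ^ (2 * e) - 1) / (q - 1))
      (q * (q ^ (2 * e - 2) - 1) / (q - 1))
      (q ^ 2 * (q ^ (2 * e - 4) - 1) / (q - 1) + q - 1)
      (q * (q ^ (2 * e - 2) - 1) / (q - 1) / q) ∧
    q * (q ^ (2 * e - 2) - 1) / (q - 1) / q
      = q ^ 2 * (q ^ (2 * e - 4) - 1) / (q - 1) + q - 1 + 2 ∧
    spectrum ℝ (Matrix.toLin' ((sp B).adjMatrix ℝ)) =
      {((q * (q ^ (2 * e - 2) - 1) / (q - 1) : ℕ) : ℝ),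
        (q : ℝ) ^ (e - 1) - 1, -(q : ℝ) ^ (e - 1) - 1} := by
  subst hq
  set q := Fintype.card F with hqdef
  have hq2 : 2 ≤ q := Fintype.one_lt_card
  open Stmt10Aux in
  -- numeric identities
  have hv : (q ^ (2 * e) - 1) / (q - 1) = N q (2 * e) := div_eq_N q (2 * e) hq2
  have hk : q * (q ^ (2 * e - 2) - 1) / (q - 1) = q * N q (2 * e - 2) :=
    mul_div_eq_N q q (2 * e - 2) hq2
  have hk2 : N q (2 * e - 1) - 1 = q * N q (2 * e - 2) := by
    rw [show 2 * e - 1 = (2 * e - 2) + 1 by omega, N_succ]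
    omega
  have hNsplit : N q (2 * e - 2) = 1 + q + q ^ 2 * N q (2 * e - 4) := by
    rw [show 2 * e - 2 = (2 * e - 4) + 1 + 1 by omega, N_succ, N_succ]
    ring
  have hl : q ^ 2 * (q ^ (2 * e - 4) - 1) / (q - 1) + q - 1 = N q (2 * e - 2) - 2 := by
    rw [mul_div_eq_N (q ^ 2) q (2 * e - 4) hq2]
    omega
  have hN2 : 2 ≤ N q (2 * e - 2) := by omega
  have hq0 : 0 < q := by omega
  have hm : q * (q ^ (2 * e - 2) - 1) / (q - 1) / q = N q (2 * e - 2) := by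
    rw [hk, Nat.mul_div_cancel_left _ hq0]
  -- the strongly regular graph
  have hsrg : (sp B).IsSRGWith (N q (2 * e)) (q * N q (2 * e - 2))
      (N q (2 * e - 2) - 2) (N q (2 * e - 2)) := by
    constructor
    · exact card_pt
    · intro x
      rw [← SimpleGraph.card_neighborSet_eq_degree, ← Nat.card_eq_fintype_card,
        ncard_neighborSet B halt hnd x (by omega)]
      exact hk2
    · intro x y hadj
      rw [← Nat.card_eq_fintype_card, ncard_common_adj B halt hnd hadj]
    · intro x y hxy hnadj
      rw [← Nat.card_eq_fintype_card, ncard_common_nonadj B halt hnd hxy hnadj]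
  have hNpos : 0 < N q (2 * e) := by
    rw [show 2 * e = (2 * e - 1) + 1 by omega, N_succ]
    omega
  have : Nonempty (Pt F (2 * e)) := by
    rw [← Fintype.card_pos_iff, card_pt (F := F) (n := 2 * e)]
    exact hNpos
  -- real identities
  have hgeomR : ((q : ℝ) - 1) * (N q (2 * e - 2) : ℝ) = (q : ℝ) ^ (2 * e - 2) - 1 := by
    have h1 := geom q (2 * e - 2) (by omega)
    have h2 := congrArg (Nat.cast : ℕ → ℝ) h1
    rw [Nat.cast_mul, Nat.cast_sub (by omega : 1 ≤ q),
      Nat.cast_sub (Nat.one_le_pow _ _ hq0), Nat.cast_pow, Nat.cast_one] at h2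
    exact h2
  have hpow : ((q : ℝ)) ^ (e - 1) * ((q : ℝ)) ^ (e - 1) = (q : ℝ) ^ (2 * e - 2) := by
    rw [← pow_add]
    congr 1
    omega
  have hqR : (0 : ℝ) < (q : ℝ) := by exact_mod_cast hq0
  have hspec : spectrum ℝ ((sp B).adjMatrix ℝ) =
      {((q * N q (2 * e - 2) : ℕ) : ℝ), (q : ℝ) ^ (e - 1) - 1, -(q : ℝ) ^ (e - 1) - 1} := by
    apply spectrum_srg (sp B) hsrg
    · rw [Nat.cast_sub hN2]
      push_cast
      ring
    · rw [Nat.cast_mul]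
      nlinarith [hgeomR, hpow]
    · exact Nat.mul_pos hq0 (by omega)
    · have hpne : (0 : ℝ) < (q : ℝ) ^ (e - 1) := pow_pos hqR _
      intro hcon
      nlinarith [hpne]
    · have hpne : (0 : ℝ) < (q : ℝ) ^ (e - 1) := pow_pos hqR _
      intro hcon
      nlinarith [hpne]
  refine ⟨?_, ?_, ?_⟩
  · rw [hv, hm, hk, hl]
    exact hsrg
  · rw [hm, hl]
    omega
  · have heq : Matrix.toLin' ((sp B).adjMatrix ℝ)
        = Matrix.toLinAlgEquiv' ((sp B).adjMatrix ℝ) := rfl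
    rw [heq, AlgEquiv.spectrum_eq Matrix.toLinAlgEquiv' ((sp B).adjMatrix ℝ), hk, hspec]
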